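/- For the chain model S = γX + ε_S, X = ε_X, Y = αX + ε_Y (diagram S ← X → Y with appropriate equations, or equivalently S ← X and X → Y), with independent centered errors of positive variances, the partial regression coefficient β_{YX·S} = σ_{XY·S}/σ²_{X·S} equals the unconditional regression coefficient β_{YX} = σ_{XY}/σ²_X. -/

import Mathlib

/-!
The residual `Y - αX = ε_Y` is uncorrelated with `X` and with `S = γX + ε_S`, so
`σ_{XY} = α σ²_X` and `σ_{SY} = α σ_{XS}`: both regression coefficients equal `α`, the partial
variance cancelling in the numerator of `β_{YX·S}`.
-/

open MeasureTheory ProbabilityTheory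

/-- Covariance of two real random variables. -/
noncomputable def cov {Ω : Type*} [MeasurableSpace Ω] (μ : Measure Ω) (X Y : Ω → ℝ) : ℝ :=
  ∫ ω, X ω * Y ω ∂μ - (∫ ω, X ω ∂μ) * (∫ ω, Y ω ∂μ)

lemma cov_eq_covariance {Ω : Type*} [MeasurableSpace Ω] {μ : Measure Ω} [IsProbabilityMeasure μ]
    {X Y : Ω → ℝ} (hX : MemLp X 2 μ) (hY : MemLp Y 2 μ) : cov μ X Y = cov[X, Y; μ] := by
  rw [covariance_eq_sub hX hY]
  rfl

lemma covariance_const_mul_add_right {Ω : Type*} [MeasurableSpace Ω] {μ : Measure Ω}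
    [IsFiniteMeasure μ] {Z W ε : Ω → ℝ} (hZ : MemLp Z 2 μ) (hW : MemLp W 2 μ)
    (hε : MemLp ε 2 μ) (a : ℝ) :
    cov[Z, fun ω ↦ a * W ω + ε ω; μ] = a * cov[Z, W; μ] + cov[Z, ε; μ] := by
  rw [show (fun ω ↦ a * W ω + ε ω) = (fun ω ↦ a * W ω) + ε from rfl,
    covariance_add_right hZ (hW.const_mul a) hε, covariance_const_mul_right]

lemma partial_regression_coeff_eq_regression_coeff {vX vS cXS cXY cSY α γ : ℝ}
    (hXS : cXS = γ * vX) (hXY : cXY = α * vX) (hSY : cSY = α * cXS)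
    (hpart : 0 < vX - cXS ^ 2 / vS) :
    (cXY - cXS * cSY / vS) / (vX - cXS ^ 2 / vS) = cXY / vX := by
  have hvX : vX ≠ 0 := by
    rintro rfl
    simp [hXS] at hpart
  rw [hXY, hSY, mul_div_cancel_right₀ α hvX,
    show α * vX - cXS * (α * cXS) / vS = α * (vX - cXS ^ 2 / vS) by ring,
    mul_div_cancel_right₀ α hpart.ne']

theorem stmt7_general {Ω : Type*} [MeasurableSpace Ω] (μ : Measure Ω) [IsProbabilityMeasure μ]
    (α γ : ℝ) (e : Fin 3 → Ω → ℝ) (X S Y : Ω → ℝ)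
    (hindep : iIndepFun e μ)
    (hL2 : ∀ i, MemLp (e i) 2 μ)
    (hX : ∀ ω, X ω = e 0 ω)
    (hS : ∀ ω, S ω = γ * X ω + e 1 ω)
    (hY : ∀ ω, Y ω = α * X ω + e 2 ω)
    (hpart : 0 < cov μ X X - (cov μ X S) ^ 2 / cov μ S S) :
    (cov μ X Y - cov μ X S * cov μ S Y / cov μ S S)
        / (cov μ X X - (cov μ X S) ^ 2 / cov μ S S)
      = cov μ X Y / cov μ X X := by
  have uncorr : ∀ i j, i ≠ j → cov[e i, e j; μ] = 0 := fun i j hij ↦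
    (hindep.indepFun hij).covariance_eq_zero (hL2 i) (hL2 j)
  obtain rfl : X = e 0 := funext hX
  obtain rfl : S = fun ω ↦ γ * e 0 ω + e 1 ω := funext hS
  obtain rfl : Y = fun ω ↦ α * e 0 ω + e 2 ω := funext hY
  have hS2 : MemLp (fun ω ↦ γ * e 0 ω + e 1 ω) 2 μ := ((hL2 0).const_mul γ).add (hL2 1)
  have hY2 : MemLp (fun ω ↦ α * e 0 ω + e 2 ω) 2 μ := ((hL2 0).const_mul α).add (hL2 2)
  refine partial_regression_coeff_eq_regression_coeff (γ := γ) (α := α) ?_ ?_ ?_ hpart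
  · rw [cov_eq_covariance (hL2 0) hS2, cov_eq_covariance (hL2 0) (hL2 0),
      covariance_const_mul_add_right (hL2 0) (hL2 0) (hL2 1), uncorr 0 1 (by decide), add_zero]
  · rw [cov_eq_covariance (hL2 0) hY2, cov_eq_covariance (hL2 0) (hL2 0),
      covariance_const_mul_add_right (hL2 0) (hL2 0) (hL2 2), uncorr 0 2 (by decide), add_zero]
  · have hSε : cov[fun ω ↦ γ * e 0 ω + e 1 ω, e 2; μ] = 0 := by
      rw [covariance_comm, covariance_const_mul_add_right (hL2 2) (hL2 0) (hL2 1),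
        uncorr 2 0 (by decide), uncorr 2 1 (by decide), mul_zero, add_zero]
    rw [cov_eq_covariance hS2 hY2, cov_eq_covariance (hL2 0) hS2,
      covariance_const_mul_add_right hS2 (hL2 0) (hL2 2), hSε, add_zero, covariance_comm]

/-- Collapsibility of the regression coefficient over S for the diagram S ← X → Y:
β_{YX·S} = β_{YX}. -/
theorem stmt7 {Ω : Type*} [MeasurableSpace Ω] (μ : Measure Ω) [IsProbabilityMeasure μ]
    (α γ : ℝ) (e : Fin 3 → Ω → ℝ) (X S Y : Ω → ℝ)
    (hmeas : ∀ i, Measurable (e i))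
    (hindep : iIndepFun e μ)
    (hL2 : ∀ i, MemLp (e i) 2 μ)
    (hmean : ∀ i, ∫ ω, e i ω ∂μ = 0)
    (hvar : ∀ i, 0 < cov μ (e i) (e i))
    (hX : ∀ ω, X ω = e 0 ω)
    (hS : ∀ ω, S ω = γ * X ω + e 1 ω)
    (hY : ∀ ω, Y ω = α * X ω + e 2 ω)
    (hpart : 0 < cov μ X X - (cov μ X S) ^ 2 / cov μ S S) :
    (cov μ X Y - cov μ X S * cov μ S Y / cov μ S S)
        / (cov μ X X - (cov μ X S) ^ 2 / cov μ S S)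
      = cov μ X Y / cov μ X X :=
  stmt7_general μ α γ e X S Y hindep hL2 hX hS hY hpart
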